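/- arXiv:1908.00944 — 4 statements merged into one kernel-verified Lean document; each statement's English description precedes it below -/
import Mathlib

section
/- Let p be an odd prime, n ≥ 1 and 1 ≤ α₁ ≤ ⋯ ≤ αₙ integers. Then the homology of the chain complex C̃(α₁)_* ⊗ ⋯ ⊗ C̃(αₙ)_* is generated, as a graded abelian group, by the homology classes of the special cycles whose first Toda index i₁ equals 1. -/
/-- The underlying module of the tensor product of `n` chain complexes of the form
`C(α)` (resp. of their reduced subcomplexes): the free `ℤ`-module on tuples of degrees,
the tuple `d` corresponding to the basis element `c_{d 0} ⊗ ⋯ ⊗ c_{d (n-1)}`. -/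
abbrev TensorC (n : ℕ) : Type := (Fin n → ℕ) →₀ ℤ

/-- The basis element `c_{d 0} ⊗ ⋯ ⊗ c_{d (n-1)}`. -/
noncomputable def cgen {n : ℕ} (d : Fin n → ℕ) : TensorC n := Finsupp.single d 1

/-- The Koszul sign exponent `d 0 + ⋯ + d (i-1)`. -/
def koszul {n : ℕ} (d : Fin n → ℕ) (i : Fin n) : ℕ :=
  ∑ j ∈ Finset.univ.filter (fun j => j < i), d j

/-- The differential of `C(α 0) ⊗ ⋯ ⊗ C(α (n-1))`: on the `i`-th tensor factor it is
`∂(c_e) = p ^ (α i) · c_{e-1}` for even `e ≥ 2` and `0` otherwise, extended to the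
tensor product by the Leibniz rule with Koszul signs. -/
noncomputable def tensorDiff (p : ℕ) {n : ℕ} (α : Fin n → ℕ) :
    TensorC n →ₗ[ℤ] TensorC n :=
  Finsupp.lift (TensorC n) ℤ (Fin n → ℕ) fun d =>
    ∑ i : Fin n,
      if 2 ≤ d i ∧ Even (d i) then
        ((-1 : ℤ) ^ koszul d i * (p : ℤ) ^ α i) • cgen (Function.update d i (d i - 1))
      else 0

/-- The special cycle associated to the set `S` of Toda slots (the indices `i₁ < ⋯ < i_j`)
and positive integers `M` (giving `m_t` on the Toda slots and `d_u` on the complementary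
slots): the Koszul-signed reordering of
`𝒯(c_{2m₁-1}^{(i₁)}, …, c_{2m_j-1}^{(i_j)}) ⊗ c_{2d₁-1}^{(s₁)} ⊗ ⋯ ⊗ c_{2d_{n-j}-1}^{(s_{n-j})}`
that puts the factor belonging to `C̃(α i)` into the `i`-th position.  The summand of `𝒯`
in which the Toda slot `ℓ ∈ S` carries the odd generator acquires the Koszul sign
`(-1) ^ #{u ∉ S ∣ u < ℓ}` (only odd–odd transpositions contribute), and its
coefficient is `p ^ (α ℓ - α i₁)`; here `i₁ = min S`. -/
noncomputable def specialCycle (p : ℕ) {n : ℕ} (α : Fin n → ℕ) (hn : 0 < n)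
    (S : Finset (Fin n)) (M : Fin n → ℕ) : TensorC n :=
  ∑ ℓ ∈ S,
    ((-1 : ℤ) ^ (Finset.univ.filter (fun u => u < ℓ ∧ u ∉ S)).card *
        (p : ℤ) ^ (α ℓ - α ⟨0, hn⟩)) •
      cgen (Function.update (fun i => if i ∈ S then 2 * M i else 2 * M i - 1) ℓ
        (2 * M ℓ - 1))

/-!
A reduced cycle `z` is determined by its coefficients at the tuples `e` with `e 0` odd: if
`e 0 ≥ 2` is even, the coefficient of `∂ z` at the tuple obtained from `e` by lowering `e 0` by
one is `± p ^ α 0 · z e` plus coefficients of `z` at tuples whose first entry is odd, and `ℤ` is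
torsion-free.  For `d` with `d 0` odd, the special cycle with Toda slots `{0} ∪ {i | d i even}`
and `m i = ⌈d i / 2⌉` is a cycle whose only term with odd first entry is `c_d`.  Hence
`z = ∑ z_d · (special cycle of d)` over the `d` with `d 0` odd, with no boundary needed.

Special cycles are cycles because the terms of `∂` indexed by `(ℓ, i)` (lower slot `i` of the
`ℓ`-th summand) and by `(i, ℓ)` hit the same generator with the same power `p ^ (α ℓ + α i - α 0)`
and opposite Koszul signs.
-/

open Finset

lemma tensorDiff_cgen (p : ℕ) {n : ℕ} (α : Fin n → ℕ) (d : Fin n → ℕ) :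
    tensorDiff p α (cgen d) = ∑ i : Fin n,
      if 2 ≤ d i ∧ Even (d i) then
        ((-1 : ℤ) ^ koszul d i * (p : ℤ) ^ α i) • cgen (Function.update d i (d i - 1))
      else 0 := by
  rw [tensorDiff, cgen, Finsupp.lift_apply, Finsupp.sum_single_index] <;> simp

lemma update_pred_eq_iff {n : ℕ} (d e : Fin n → ℕ) (i : Fin n) :
    ((2 ≤ d i ∧ Even (d i)) ∧ Function.update d i (d i - 1) = e) ↔
      (Odd (e i) ∧ d = Function.update e i (e i + 1)) := by
  constructor
  · rintro ⟨⟨h2, k, hk⟩, rfl⟩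
    refine ⟨⟨k - 1, by simp; omega⟩, ?_⟩
    funext j
    rcases eq_or_ne j i with rfl | hj
    · simp; omega
    · simp [hj]
  · rintro ⟨⟨k, hk⟩, rfl⟩
    simp [hk, parity_simps]

lemma tensorDiff_apply (p : ℕ) {n : ℕ} (α : Fin n → ℕ) (z : TensorC n) (e : Fin n → ℕ) :
    tensorDiff p α z e = ∑ i with Odd (e i),
      (-1 : ℤ) ^ koszul (Function.update e i (e i + 1)) i * (p : ℤ) ^ α i *
        z (Function.update e i (e i + 1)) := by
  induction z using Finsupp.induction_linear with
  | zero => simp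
  | add x y hx hy => simp only [map_add, Finsupp.add_apply, hx, hy, mul_add, sum_add_distrib]
  | single d c =>
    rw [← mul_one c, ← smul_eq_mul, ← Finsupp.smul_single, ← cgen, map_smul, tensorDiff_cgen,
      sum_filter]
    simp only [Finsupp.smul_apply, Finsupp.finsetSum_apply, smul_eq_mul, mul_sum]
    refine sum_congr rfl fun i _ => ?_
    rw [apply_ite (fun f : TensorC n => f e)]
    simp only [Finsupp.smul_apply, cgen, Finsupp.single_apply, smul_eq_mul, mul_ite, mul_one,
      mul_zero, Finsupp.coe_zero, Pi.zero_apply, ← ite_and, update_pred_eq_iff]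
    split_ifs with h
    · rw [← h.2]; ring
    · rfl

lemma eq_zero_of_tensorDiff_eq_zero {p : ℕ} (hp : p ≠ 0) {n : ℕ} {α : Fin n → ℕ}
    {x : TensorC n} (hx : tensorDiff p α x = 0) (i : Fin n)
    (hxi : ∀ e, Odd (e i) ∨ e i = 0 → x e = 0) : x = 0 := by
  ext e
  by_cases he : Odd (e i) ∨ e i = 0
  · exact hxi e he
  obtain ⟨k, hk⟩ : ∃ k, e i = 2 * k + 2 := by
    obtain ⟨k, hk⟩ := Nat.not_odd_iff_even.mp (not_or.mp he).1
    exact ⟨k - 1, by omega⟩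
  set e' := Function.update e i (2 * k + 1)
  have he'i : e' i = 2 * k + 1 := by simp [e']
  have hraise : Function.update e' i (e' i + 1) = e := by
    funext j; rcases eq_or_ne j i with rfl | hj <;> simp [e', *]
  have hcyc : tensorDiff p α x e' = 0 := by rw [hx]; rfl
  rw [tensorDiff_apply, sum_eq_single_of_mem i (by simp [he'i]), hraise] at hcyc
  · simpa [hp] using hcyc
  · intro j _ hji
    rw [hxi _ (Or.inl (by simp [hji.symm, he'i])), mul_zero]

section SpecialCycle

variable {n : ℕ} (S : Finset (Fin n)) (M : Fin n → ℕ)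

def todaTuple (ℓ : Fin n) : Fin n → ℕ :=
  Function.update (fun i => if i ∈ S then 2 * M i else 2 * M i - 1) ℓ (2 * M ℓ - 1)

lemma specialCycle_eq_sum (p : ℕ) (α : Fin n → ℕ) (hn : 0 < n) :
    specialCycle p α hn S M = ∑ ℓ ∈ S,
      ((-1 : ℤ) ^ #{u | u < ℓ ∧ u ∉ S} * (p : ℤ) ^ (α ℓ - α ⟨0, hn⟩)) •
        cgen (todaTuple S M ℓ) :=
  rfl

variable {S M}

lemma todaTuple_apply_of_ne {ℓ i : Fin n} (hi : i ≠ ℓ) :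
    todaTuple S M ℓ i = if i ∈ S then 2 * M i else 2 * M i - 1 := by
  simp [todaTuple, hi]

lemma odd_todaTuple_iff (hM : ∀ i, 1 ≤ M i) (ℓ i : Fin n) :
    Odd (todaTuple S M ℓ i) ↔ i ∉ S ∨ i = ℓ := by
  have := hM i
  rcases eq_or_ne i ℓ with rfl | hi
  · simp only [todaTuple, Function.update_self, or_true, iff_true, Nat.odd_iff]
    omega
  · by_cases hiS : i ∈ S <;> simp [todaTuple_apply_of_ne hi, hiS, hi, Nat.odd_iff]; omega

lemma one_le_todaTuple (hM : ∀ i, 1 ≤ M i) (ℓ i : Fin n) : 1 ≤ todaTuple S M ℓ i := by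
  have := hM i
  rcases eq_or_ne i ℓ with rfl | hi
  · simp only [todaTuple, Function.update_self]; omega
  · rw [todaTuple_apply_of_ne hi]; split_ifs <;> omega

lemma neg_one_pow_koszul_todaTuple (hM : ∀ i, 1 ≤ M i) {ℓ : Fin n} (hℓ : ℓ ∈ S) (i : Fin n) :
    (-1 : ℤ) ^ koszul (todaTuple S M ℓ) i =
      (-1 : ℤ) ^ #{u | u < i ∧ u ∉ S} * if ℓ < i then -1 else 1 := by
  have hfactor : ∀ u, (-1 : ℤ) ^ todaTuple S M ℓ u =
      (if u ∉ S then -1 else 1) * if u = ℓ then -1 else 1 := by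
    intro u
    rcases (todaTuple S M ℓ u).even_or_odd with h | h
    · have h' := (odd_todaTuple_iff hM ℓ u).not.mp (Nat.not_odd_iff_even.mpr h)
      simp only [not_or, not_not] at h'
      simp [h.neg_one_pow, h'.1, h'.2]
    · rw [h.neg_one_pow]
      rcases (odd_todaTuple_iff hM ℓ u).mp h with hu | rfl
      · simp [hu, show u ≠ ℓ from fun h => hu (h ▸ hℓ)]
      · simp [hℓ]
  rw [koszul, ← prod_pow_eq_pow_sum, prod_congr rfl fun u _ => hfactor u, prod_mul_distrib,
    prod_ite_eq', prod_ite, prod_const_one, mul_one, prod_const, filter_filter]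
  simp

lemma tensorDiff_cgen_todaTuple (p : ℕ) (α : Fin n → ℕ) (hM : ∀ i, 1 ≤ M i) (ℓ : Fin n) :
    tensorDiff p α (cgen (todaTuple S M ℓ)) = ∑ i ∈ S with i ≠ ℓ,
      ((-1 : ℤ) ^ koszul (todaTuple S M ℓ) i * (p : ℤ) ^ α i) •
        cgen (Function.update (todaTuple S M ℓ) i (2 * M i - 1)) := by
  have hlowered : ∀ i, (2 ≤ todaTuple S M ℓ i ∧ Even (todaTuple S M ℓ i)) ↔ i ∈ S ∧ i ≠ ℓ := by
    intro i
    rw [← Nat.not_odd_iff_even, odd_todaTuple_iff hM]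
    rcases eq_or_ne i ℓ with rfl | hi
    · simp
    · have := hM i
      by_cases hiS : i ∈ S <;> simp [todaTuple_apply_of_ne hi, hiS, hi]; omega
  rw [tensorDiff_cgen, ← sum_filter]
  refine sum_congr (by ext i; simp [hlowered]) fun i hi => ?_
  simp only [mem_filter] at hi
  simp [todaTuple_apply_of_ne hi.2, hi.1]

theorem tensorDiff_specialCycle (p : ℕ) (α : Fin n → ℕ) (hn : 0 < n) (hM : ∀ i, 1 ≤ M i)
    (hα : ∀ ℓ ∈ S, α ⟨0, hn⟩ ≤ α ℓ) : tensorDiff p α (specialCycle p α hn S M) = 0 := by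
  simp only [specialCycle_eq_sum, map_sum, map_smul, tensorDiff_cgen_todaTuple p α hM, smul_sum,
    sum_filter, smul_ite, smul_zero, smul_smul, ← sum_product']
  refine sum_involution (fun x _ => x.swap) ?_ (fun x _ hx => ?_) (by simp_all) (by simp)
  · rintro ⟨ℓ, i⟩ hx
    simp only [mem_product] at hx
    rcases eq_or_ne i ℓ with rfl | hiℓ
    · simp
    have htuple : Function.update (todaTuple S M ℓ) i (2 * M i - 1) =
        Function.update (todaTuple S M i) ℓ (2 * M ℓ - 1) := Function.update_comm hiℓ.symm _ _ _
    obtain ⟨a, ha⟩ := Nat.exists_eq_add_of_le (hα ℓ hx.1)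
    obtain ⟨b, hb⟩ := Nat.exists_eq_add_of_le (hα i hx.2)
    simp only [Prod.swap, ne_eq, hiℓ, hiℓ.symm, not_false_eq_true, if_true, htuple, ← add_smul,
      neg_one_pow_koszul_todaTuple hM hx.1, neg_one_pow_koszul_todaTuple hM hx.2, ha, hb,
      Nat.add_sub_cancel_left]
    refine smul_eq_zero_of_left ?_ _
    rcases hiℓ.lt_or_gt with h | h <;> simp only [h, h.not_gt, if_true, if_false] <;> ring
  · obtain ⟨ℓ, i⟩ := x
    rintro h
    simp only [Prod.swap_prod_mk, Prod.mk.injEq] at h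
    simp [h.1] at hx

lemma specialCycle_apply_eq_zero (p : ℕ) (α : Fin n → ℕ) (hn : 0 < n) (hM : ∀ i, 1 ≤ M i)
    {e : Fin n → ℕ} {i : Fin n} (he : e i = 0) : specialCycle p α hn S M e = 0 := by
  rw [specialCycle_eq_sum, Finsupp.finsetSum_apply]
  refine sum_eq_zero fun ℓ _ => ?_
  have hne : todaTuple S M ℓ ≠ e := fun h => by
    have := one_le_todaTuple (S := S) hM ℓ i
    rw [h, he] at this
    omega
  simp [cgen, hne]

lemma specialCycle_apply_of_odd (p : ℕ) (α : Fin n → ℕ) (hn : 0 < n) (h0 : ⟨0, hn⟩ ∈ S)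
    {e : Fin n → ℕ} (he : Odd (e ⟨0, hn⟩)) :
    specialCycle p α hn S M e = cgen (todaTuple S M ⟨0, hn⟩) e := by
  rw [specialCycle_eq_sum, Finsupp.finsetSum_apply, sum_eq_single_of_mem _ h0]
  · have : #{u | u < (⟨0, hn⟩ : Fin n) ∧ u ∉ S} = 0 := by
      simp [Fin.lt_def]
    simp [this]
  · intro ℓ _ hℓ
    have hne : todaTuple S M ℓ ≠ e := fun h => by
      have := congrFun h ⟨0, hn⟩
      rw [todaTuple_apply_of_ne hℓ.symm, if_pos h0] at this
      exact Nat.not_even_iff_odd.mpr he ⟨M ⟨0, hn⟩, by omega⟩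
    simp [cgen, hne]

end SpecialCycle

section CycleDecomposition

variable {n : ℕ} (hn : 0 < n)

def todaSlots (d : Fin n → ℕ) : Finset (Fin n) :=
  insert ⟨0, hn⟩ (univ.filter fun i => Even (d i))

lemma zero_mem_todaSlots (d : Fin n → ℕ) : ⟨0, hn⟩ ∈ todaSlots hn d := mem_insert_self _ _

def halfDegrees (d : Fin n → ℕ) : Fin n → ℕ := fun i => (d i + 1) / 2

lemma one_le_halfDegrees {d : Fin n → ℕ} (hd : ∀ i, 1 ≤ d i) (i : Fin n) :
    1 ≤ halfDegrees d i := by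
  have := hd i
  simp only [halfDegrees]
  omega

lemma todaTuple_todaSlots {d : Fin n → ℕ} (hd : Odd (d ⟨0, hn⟩)) :
    todaTuple (todaSlots hn d) (halfDegrees d) ⟨0, hn⟩ = d := by
  funext i
  rcases eq_or_ne i ⟨0, hn⟩ with rfl | hi
  · obtain ⟨k, hk⟩ := hd
    simp only [todaTuple, Function.update_self, halfDegrees]
    omega
  · have hmem : i ∈ todaSlots hn d ↔ Even (d i) := by simp [todaSlots, hi]
    rw [todaTuple_apply_of_ne hi]
    simp only [hmem, halfDegrees]
    split_ifs with h
    · obtain ⟨k, hk⟩ := h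
      omega
    · obtain ⟨k, hk⟩ := Nat.not_even_iff_odd.mp h
      omega

theorem eq_sum_specialCycle {p : ℕ} (hp : p ≠ 0) {α : Fin n → ℕ} (hα : Monotone α)
    {z : TensorC n} (hzred : ∀ d ∈ z.support, ∀ i, 1 ≤ d i) (hzcyc : tensorDiff p α z = 0) :
    z = ∑ d ∈ z.support with Odd (d ⟨0, hn⟩),
      z d • specialCycle p α hn (todaSlots hn d) (halfDegrees d) := by
  have hM : ∀ d ∈ z.support, ∀ i, 1 ≤ halfDegrees d i := fun d hd =>
    one_le_halfDegrees (hzred d hd)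
  have hscyc : tensorDiff p α (∑ d ∈ z.support with Odd (d ⟨0, hn⟩),
      z d • specialCycle p α hn (todaSlots hn d) (halfDegrees d)) = 0 := by
    refine (map_sum _ _ _).trans (sum_eq_zero fun d hd => ?_)
    rw [map_smul, tensorDiff_specialCycle p α hn (hM d (mem_filter.mp hd).1)
      (fun ℓ _ => hα (Nat.zero_le ℓ.val)), smul_zero]
  refine sub_eq_zero.mp (eq_zero_of_tensorDiff_eq_zero hp
    (by rw [map_sub, hzcyc, hscyc, sub_zero]) ⟨0, hn⟩ fun e he => ?_)
  rw [Finsupp.sub_apply, Finsupp.finsetSum_apply, sub_eq_zero]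
  rcases he with he | he
  · rw [sum_congr rfl fun d hd => by
      rw [Finsupp.smul_apply, specialCycle_apply_of_odd p α hn (zero_mem_todaSlots hn d) he,
        todaTuple_todaSlots hn (mem_filter.mp hd).2]]
    simp only [cgen, Finsupp.single_apply, smul_eq_mul, mul_ite, mul_one, mul_zero, sum_ite_eq']
    split_ifs with hT
    · rfl
    · exact Finsupp.notMem_support_iff.mp fun h => hT (mem_filter.mpr ⟨h, he⟩)
  · have hze : z e = 0 := Finsupp.notMem_support_iff.mp fun h => by
      have := hzred e h ⟨0, hn⟩
      omega
    rw [hze, eq_comm]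
    refine sum_eq_zero fun d hd => ?_
    rw [Finsupp.smul_apply, specialCycle_apply_eq_zero p α hn (hM d (mem_filter.mp hd).1) he,
      smul_zero]

end CycleDecomposition

theorem stmt1_general (p : ℕ) (hp : p.Prime) (n : ℕ) (hn : 0 < n)
    (α : Fin n → ℕ) (hα : Monotone α)
    (z : TensorC n) (hzred : ∀ d ∈ z.support, ∀ i, 1 ≤ d i)
    (hzcyc : tensorDiff p α z = 0) :
    ∃ s ∈ Submodule.span ℤ {x : TensorC n |
        ∃ (S : Finset (Fin n)) (M : Fin n → ℕ),
          (⟨0, hn⟩ : Fin n) ∈ S ∧ (∀ i, 1 ≤ M i) ∧ x = specialCycle p α hn S M},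
      ∃ w : TensorC n, (∀ d ∈ w.support, ∀ i, 1 ≤ d i) ∧ z = s + tensorDiff p α w := by
  have hz := eq_sum_specialCycle hn hp.ne_zero hα hzred hzcyc
  refine ⟨_, ?_, 0, by simp, hz.trans (by rw [map_zero, add_zero])⟩
  refine Submodule.sum_mem _ fun d hd => Submodule.smul_mem _ _ (Submodule.subset_span
    ⟨_, _, zero_mem_todaSlots hn d, one_le_halfDegrees (hzred d (mem_filter.mp hd).1), rfl⟩)

/-- The homology of `C̃(α₁) ⊗ ⋯ ⊗ C̃(αₙ)` is generated by the classes of the special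
cycles with first Toda index `i₁ = 1`: every cycle `z` of the reduced tensor complex
(i.e. supported on tuples with all degrees `≥ 1` and with `∂ z = 0`) differs from an
element of the `ℤ`-span of such special cycles by the boundary of an element of the
reduced complex. -/
theorem stmt1 (p : ℕ) (hp : p.Prime) (hodd : Odd p) (n : ℕ) (hn : 0 < n)
    (α : Fin n → ℕ) (hα0 : 1 ≤ α ⟨0, hn⟩) (hα : Monotone α)
    (z : TensorC n) (hzred : ∀ d ∈ z.support, ∀ i, 1 ≤ d i)
    (hzcyc : tensorDiff p α z = 0) :
    ∃ s ∈ Submodule.span ℤ {x : TensorC n |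
        ∃ (S : Finset (Fin n)) (M : Fin n → ℕ),
          (⟨0, hn⟩ : Fin n) ∈ S ∧ (∀ i, 1 ≤ M i) ∧ x = specialCycle p α hn S M},
      ∃ w : TensorC n, (∀ d ∈ w.support, ∀ i, 1 ≤ d i) ∧ z = s + tensorDiff p α w :=
  stmt1_general p hp n hn α hα z hzred hzcyc
end

section
/- Let R be a commutative ring, let t, v ∈ R with v² = 0, and let q ≥ 2 be an integer. Let f = t·X + v·X^q ∈ R[[X]], and for α ≥ 1 let f^{∘α} denote the α-fold composite of f with itself under substitution of power series (well defined since f has zero constant term). Then f^{∘α} − t^α·X − t^{α−1}·v·X^q lies in t^α·R[[X]]; that is, every coefficient of f^{∘α} − t^α·X − t^{α−1}·v·X^q is divisible by t^α. -/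
open PowerSeries

/-- Substitution of the power series `g` into `f`, i.e. the composite `f ∘ g`.
For `g` with zero constant term one has `coeff n (g ^ k) = 0` for `k > n`, so the
truncated sum below agrees with the usual substitution `Σ_k f_k · g^k`. -/
noncomputable def psComp {R : Type*} [CommRing R] (f g : PowerSeries R) : PowerSeries R :=
  PowerSeries.mk fun n =>
    ∑ k ∈ Finset.range (n + 1), PowerSeries.coeff k f * PowerSeries.coeff n (g ^ k)

/-- The `α`-fold composite `f^{∘α}` of a power series with itself
(with `f^{∘0} = X` the identity). -/
noncomputable def psIter {R : Type*} [CommRing R] (f : PowerSeries R) : ℕ → PowerSeries R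
  | 0 => PowerSeries.X
  | n + 1 => psComp f (psIter f n)

/-!
Substituting into `f = t·X + v·X^q` is `u ↦ t·u + v·u^q` on series without constant term, so the
iterates obey `x_{m+1} = t·x_m + v·x_m^q` with `x_0 = X`, and everything happens in an arbitrary
commutative ring. Inductively `x_{m+1} = t^m·(t·(X + r) + v·X^q)`; as `v² = 0`, the `v·X^q` part
dies inside `v·x_{m+1}^q = t^{(m+1)q}·v·(X + r)^q`, which is divisible by `t^{m+2}` since `q ≥ 2`.
-/

theorem mul_add_mul_pow_of_sq_eq_zero {A : Type*} [CommRing A] {w : A} (hw : w ^ 2 = 0)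
    (a b : A) (n : ℕ) : w * (a + w * b) ^ n = w * a ^ n := by
  obtain ⟨s, hs⟩ := sub_dvd_pow_sub_pow (a + w * b) a n
  linear_combination w * hs + b * s * hw

theorem pow_succ_dvd_sub_of_recurrence {A : Type*} [CommRing A] {c w : A} (hw : w ^ 2 = 0)
    {q : ℕ} (hq : 2 ≤ q) {x : ℕ → A} (hx : ∀ m, x (m + 1) = c * x m + w * x m ^ q) (m : ℕ) :
    c ^ (m + 1) ∣ x (m + 1) - c ^ (m + 1) * x 0 - c ^ m * w * x 0 ^ q := by
  induction m with
  | zero => exact ⟨0, by rw [hx]; ring⟩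
  | succ m ih =>
    obtain ⟨r, hr⟩ := ih
    obtain ⟨s, rfl⟩ : ∃ s, q = s + 2 := ⟨q - 2, by omega⟩
    have hxm : x (m + 1) = c ^ m * (c * (x 0 + r) + w * x 0 ^ (s + 2)) := by
      linear_combination hr
    have hw_pow :
        w * x (m + 1) ^ (s + 2) = c ^ ((m + 1) * (s + 2)) * w * (x 0 + r) ^ (s + 2) := by
      rw [hxm, mul_pow, mul_left_comm, mul_add_mul_pow_of_sq_eq_zero hw, mul_pow]
      ring
    refine ⟨r + c ^ ((m + 1) * s + m) * w * (x 0 + r) ^ (s + 2), ?_⟩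
    rw [hx, hw_pow, hxm]
    ring

section Composition

variable {R : Type*} [CommRing R]

theorem coeff_pow_eq_zero_of_lt {g : PowerSeries R} (hg : constantCoeff g = 0) {n k : ℕ}
    (h : n < k) : coeff n (g ^ k) = 0 :=
  coeff_of_lt_order n ((Nat.cast_lt.2 h).trans_le (le_order_pow_of_constantCoeff_eq_zero k hg))

theorem constantCoeff_psComp (f g : PowerSeries R) :
    constantCoeff (psComp f g) = constantCoeff f := by
  rw [← coeff_zero_eq_constantCoeff_apply, ← coeff_zero_eq_constantCoeff_apply, psComp, coeff_mk]
  simp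

theorem psComp_add (f₁ f₂ g : PowerSeries R) :
    psComp (f₁ + f₂) g = psComp f₁ g + psComp f₂ g := by
  ext n
  simp [psComp, add_mul, Finset.sum_add_distrib]

theorem psComp_C_mul_X_pow (a : R) (k : ℕ) {g : PowerSeries R} (hg : constantCoeff g = 0) :
    psComp (C a * X ^ k) g = C a * g ^ k := by
  ext n
  simp only [psComp, coeff_mk, coeff_C_mul, coeff_X_pow, mul_ite, mul_one, mul_zero, ite_mul,
    zero_mul, Finset.sum_ite_eq', Finset.mem_range]
  split_ifs with hk
  · rfl
  · rw [coeff_pow_eq_zero_of_lt hg (by omega), mul_zero]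

theorem constantCoeff_psIter {f : PowerSeries R} (hf : constantCoeff f = 0) :
    ∀ m, constantCoeff (psIter f m) = 0
  | 0 => constantCoeff_X
  | _ + 1 => (constantCoeff_psComp _ _).trans hf

theorem psIter_succ_C_mul_X_add_C_mul_X_pow (t v : R) {q : ℕ} (hq : q ≠ 0) (m : ℕ) :
    psIter (C t * X + C v * X ^ q) (m + 1) =
      C t * psIter (C t * X + C v * X ^ q) m + C v * psIter (C t * X + C v * X ^ q) m ^ q := by
  have hf : constantCoeff (C t * X + C v * X ^ q) = 0 := by simp [hq]
  have hg := constantCoeff_psIter hf m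
  rw [psIter, psComp_add, psComp_C_mul_X_pow v q hg]
  simpa using psComp_C_mul_X_pow t 1 hg

end Composition

/-- Let `t v : R` with `v² = 0`, `q ≥ 2` and `f = t·X + v·X^q`. Then every coefficient of
`f^{∘α} − t^α·X − t^{α-1}·v·X^q` is divisible by `t^α`. -/
theorem stmt5 (R : Type*) [CommRing R] (t v : R) (hv : v ^ 2 = 0)
    (q : ℕ) (hq : 2 ≤ q) (α : ℕ) (hα : 1 ≤ α) (n : ℕ) :
    t ^ α ∣ PowerSeries.coeff n
      (psIter (PowerSeries.C t * PowerSeries.X + PowerSeries.C v * PowerSeries.X ^ q) α -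
        PowerSeries.C (t ^ α) * PowerSeries.X -
        PowerSeries.C (t ^ (α - 1) * v) * PowerSeries.X ^ q) := by
  obtain ⟨m, rfl⟩ : ∃ m, α = m + 1 := ⟨α - 1, by omega⟩
  have hCv : C v ^ 2 = 0 := by rw [← map_pow, hv, map_zero]
  obtain ⟨r, hr⟩ := pow_succ_dvd_sub_of_recurrence hCv hq
    (psIter_succ_C_mul_X_add_C_mul_X_pow t v (by omega)) m
  rw [psIter] at hr
  rw [Nat.add_sub_cancel, map_mul, map_pow, map_pow, hr, ← map_pow, coeff_C_mul]
  exact dvd_mul_right _ _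
end

section
/- Let p be an odd prime and n ≥ 0. Then 𝒟^{n+1,n}_* = 𝒟^{n+1,∞}_*; that is, if an element x ∈ (C_*)^{n+1}_{(1)} satisfies ∂^{(κ)}(x) = 0 for all 0 ≤ κ ≤ n, then ∂^{(κ)}(x) = 0 for all κ ≥ 0. -/
/-- The `n`-fold graded tensor power `(C_*)^n` over `𝔽_p`: the free `ZMod p`-module on
tuples of degrees, the tuple `d` (with all `d i ≥ 1`) corresponding to the basis element
`c_{d 0} ⊗ ⋯ ⊗ c_{d (n-1)}`. -/
abbrev Vmod (p n : ℕ) : Type := (Fin n → ℕ) →₀ ZMod p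

/-- The derivation `∂^{(κ)}` on `(C_*)^n`: on a single factor it sends `c_d` to
`c_{d - 2p^κ + 1}` if `d` is even and `d ≥ 2p^κ` and to `0` otherwise, extended to the
tensor power by the Leibniz rule with Koszul signs. -/
noncomputable def del (p n κ : ℕ) : Vmod p n →ₗ[ZMod p] Vmod p n :=
  Finsupp.lift (Vmod p n) (ZMod p) (Fin n → ℕ) fun d =>
    ∑ i : Fin n,
      if Even (d i) ∧ 2 * p ^ κ ≤ d i then
        ((-1 : ZMod p) ^ koszul d i) •
          Finsupp.single (Function.update d i (d i - 2 * p ^ κ + 1)) (1 : ZMod p)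
      else 0

/-- The subspace `(C_*)^n_{(γ)}` spanned by the basis tensors (all degrees `≥ 1`)
having exactly `γ` even-degree components. -/
def Cpart (p n γ : ℕ) : Submodule (ZMod p) (Vmod p n) :=
  Finsupp.supported (ZMod p) (ZMod p)
    {d | (∀ i, 1 ≤ d i) ∧ (Finset.univ.filter fun i => Even (d i)).card = γ}

-- auxiliary operator
noncomputable def Vop (p N : ℕ) (i : Fin N) : Module.End (ZMod p) (Vmod p N) :=
  Finsupp.lift (Vmod p N) (ZMod p) (Fin N → ℕ) fun e =>
    if 3 ≤ e i then Finsupp.single (Function.update e i (e i - 2)) (1 : ZMod p) else 0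

variable {p N : ℕ}

lemma Vop_single (i : Fin N) (e : Fin N → ℕ) (a : ZMod p) :
    Vop p N i (Finsupp.single e a) =
      if 3 ≤ e i then Finsupp.single (Function.update e i (e i - 2)) a else 0 := by
  rw [Vop, Finsupp.lift_apply, Finsupp.sum_single_index]
  · split_ifs <;> simp
  · exact zero_smul _ _

lemma del_single (κ : ℕ) (d : Fin N → ℕ) (a : ZMod p) :
    del p N κ (Finsupp.single d a) =
      a • ∑ i : Fin N,
        if Even (d i) ∧ 2 * p ^ κ ≤ d i then
          ((-1 : ZMod p) ^ koszul d i) •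
            Finsupp.single (Function.update d i (d i - 2 * p ^ κ + 1)) (1 : ZMod p)
        else 0 := by
  rw [del, Finsupp.lift_apply, Finsupp.sum_single_index]
  exact zero_smul _ _

lemma Vop_pow_single (i : Fin N) (m : ℕ) (e : Fin N → ℕ) (a : ZMod p) (he : 1 ≤ e i) :
    ((Vop p N i) ^ m) (Finsupp.single e a) =
      if 2 * m + 1 ≤ e i then
        Finsupp.single (Function.update e i (e i - 2 * m)) a else 0 := by
  induction m generalizing e with
  | zero =>
      rw [pow_zero, Module.End.one_apply, if_pos (by omega)]
      simp [Function.update_eq_self]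
  | succ m ih =>
      rw [pow_succ, Module.End.mul_apply, Vop_single]
      by_cases h1 : 3 ≤ e i
      · rw [if_pos h1, ih _ (by simp [Function.update_self]; omega)]
        simp only [Function.update_self, Function.update_idem]
        split_ifs with h2 h3 h4
        · have : e i - 2 - 2 * m = e i - 2 * (m + 1) := by omega
          rw [this]
        · omega
        · omega
        · rfl
      · rw [if_neg h1, map_zero, if_neg (by omega)]

lemma koszul_update (d : Fin N → ℕ) (i : Fin N) (v : ℕ) :
    koszul (Function.update d i v) i = koszul d i := by
  unfold koszul
  refine Finset.sum_congr rfl fun j hj => ?_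
  rw [Finset.mem_filter] at hj
  exact Function.update_of_ne hj.2.ne _ _

lemma key_single (hp1 : 1 ≤ p) (κ : ℕ) (i : Fin N) (d : Fin N → ℕ) (hd1 : ∀ j, 1 ≤ d j)
    (hde : Even (d i)) (hodd : ∀ j, j ≠ i → ¬ Even (d j)) (a : ZMod p) :
    del p N κ (Finsupp.single d a) =
      ((Vop p N i) ^ (p ^ κ - 1)) (del p N 0 (Finsupp.single d a)) := by
  have hq : 1 ≤ p ^ κ := Nat.one_le_pow _ _ (by omega)
  have h2 : 2 ≤ d i := by rcases hde with ⟨k, hk⟩; have := hd1 i; omega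
  have hsum : ∀ κ' : ℕ,
      (∑ i' : Fin N,
        if Even (d i') ∧ 2 * p ^ κ' ≤ d i' then
          ((-1 : ZMod p) ^ koszul d i') •
            Finsupp.single (Function.update d i' (d i' - 2 * p ^ κ' + 1)) (1 : ZMod p)
        else 0) =
      (if Even (d i) ∧ 2 * p ^ κ' ≤ d i then
          ((-1 : ZMod p) ^ koszul d i) •
            Finsupp.single (Function.update d i (d i - 2 * p ^ κ' + 1)) (1 : ZMod p)
        else 0) := by
    intro κ'
    refine Finset.sum_eq_single i (fun b _ hb => ?_) (by simp)
    exact if_neg (fun hc => hodd b hb hc.1)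
  rw [del_single, del_single, hsum, hsum]
  have hP0 : Even (d i) ∧ 2 * p ^ 0 ≤ d i := ⟨hde, by rw [pow_zero]; omega⟩
  rw [if_pos hP0, map_smul, map_smul]
  have hval0 : d i - 2 * p ^ 0 + 1 = d i - 1 := by rw [pow_zero]; omega
  rw [hval0]
  rw [Vop_pow_single i _ _ _ (by simp [Function.update_self]; omega)]
  simp only [Function.update_self, Function.update_idem, koszul_update]
  by_cases hc : 2 * p ^ κ ≤ d i
  · rw [if_pos ⟨hde, hc⟩, if_pos (by omega)]
    have : d i - 1 - 2 * (p ^ κ - 1) = d i - 2 * p ^ κ + 1 := by omega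
    rw [this]
  · rw [if_neg (fun hcc => hc hcc.2), if_neg (by omega)]
    simp

lemma parts_sum (x : Vmod p N) (hx : x ∈ Cpart p N 1) :
    ∑ i : Fin N, x.filter (fun d => Even (d i)) = x := by
  ext d
  rw [Finsupp.finset_sum_apply]
  simp only [Finsupp.filter_apply]
  by_cases hd : x d = 0
  · simp [hd]
  · have hmem := (Finsupp.mem_supported (ZMod p) x).1 hx (Finset.mem_coe.mpr (Finsupp.mem_support_iff.2 hd))
    rw [← Finset.sum_filter, Finset.sum_const, hmem.2, one_smul]

lemma support_facts (x : Vmod p N) (hx : x ∈ Cpart p N 1) (i : Fin N) (d : Fin N → ℕ)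
    (hd : d ∈ (x.filter (fun d => Even (d i))).support) :
    (∀ j, 1 ≤ d j) ∧ Even (d i) ∧ ∀ j, j ≠ i → ¬ Even (d j) := by
  rw [Finsupp.support_filter, Finset.mem_filter] at hd
  have hmem := (Finsupp.mem_supported (ZMod p) x).1 hx (Finset.mem_coe.mpr hd.1)
  refine ⟨hmem.1, hd.2, fun j hj hEj => ?_⟩
  have hsub : ({i, j} : Finset (Fin N)) ⊆ Finset.univ.filter (fun k => Even (d k)) := by
    intro k hk
    rw [Finset.mem_insert, Finset.mem_singleton] at hk
    rcases hk with rfl | rfl <;> simp [hd.2, hEj]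
  have hcard := Finset.card_le_card hsub
  rw [Finset.card_pair (Ne.symm hj), hmem.2] at hcard
  omega

lemma key_part (hp1 : 1 ≤ p) (x : Vmod p N) (hx : x ∈ Cpart p N 1) (i : Fin N) (κ : ℕ) :
    del p N κ (x.filter fun d => Even (d i)) =
      ((Vop p N i) ^ (p ^ κ - 1)) (del p N 0 (x.filter fun d => Even (d i))) := by
  set y := x.filter fun d => Even (d i) with hy
  conv_lhs => rw [← Finsupp.sum_single y]
  conv_rhs => rw [← Finsupp.sum_single y]
  rw [map_finsuppSum, map_finsuppSum, map_finsuppSum]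
  refine Finsupp.sum_congr fun d hd => ?_
  obtain ⟨h1, h2, h3⟩ := support_facts x hx i d hd
  exact key_single hp1 κ i d h1 h2 h3 _

lemma del_eq (hp1 : 1 ≤ p) (x : Vmod p N) (hx : x ∈ Cpart p N 1) (κ : ℕ) :
    del p N κ x =
      ∑ i : Fin N, ((Vop p N i) ^ (p ^ κ - 1)) (del p N 0 (x.filter fun d => Even (d i))) := by
  conv_lhs => rw [← parts_sum x hx]
  rw [map_sum]
  exact Finset.sum_congr rfl fun i _ => key_part hp1 x hx i κ

section Poly
open MvPolynomial

variable (p n : ℕ) [Fact p.Prime]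

local notation "R" => MvPolynomial (Fin (n+1)) (ZMod p)

lemma fresh (a : ℕ → R) (i : Fin (n+1)) (m : ℕ) :
    (∑ j ∈ Finset.range m, a j * (X i : R) ^ (p ^ j)) ^ p =
      ∑ j ∈ Finset.range m, (a j) ^ p * (X i : R) ^ (p ^ (j + 1)) := by
  rw [sum_pow_char]
  refine Finset.sum_congr rfl fun j _ => ?_
  rw [mul_pow, ← pow_mul, ← pow_succ]

lemma psi_aux : ∀ k : ℕ, k ≤ n → ∃ a : ℕ → R,
    a (k+1) = 1 ∧ (∀ j, k+2 ≤ j → a j = 0) ∧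
    ∀ i : Fin (n+1), (i:ℕ) ≤ k →
      ∑ j ∈ Finset.range (k+2), a j * (X i : R) ^ (p ^ j) = 0 := by
  have hp1 : 1 ≤ p := (Fact.out : p.Prime).one_le
  intro k
  induction k with
  | zero =>
      intro _
      refine ⟨fun j => if j = 0 then -(X (0 : Fin (n+1)) : R)^(p-1) else if j = 1 then 1 else 0,
        by norm_num, fun j hj => by show (if j = 0 then -(X (0 : Fin (n+1)) : R)^(p-1) else if j = 1 then 1 else 0) = 0; rw [if_neg (by omega), if_neg (by omega)], ?_⟩
      intro i hi
      have h0 : i = 0 := Fin.ext (by simp only [Fin.val_zero]; omega)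
      have hxp : (X (0:Fin (n+1)) : R)^(p-1) * X 0 = X 0 ^ p := by
        rw [← pow_succ, Nat.sub_add_cancel hp1]
      rw [h0, Finset.sum_range_succ, Finset.sum_range_one]
      norm_num [hxp]
  | succ k ih =>
      intro hk
      obtain ⟨a, ha1, ha0, hav⟩ := ih (by omega)
      set i₀ : Fin (n+1) := ⟨k+1, by omega⟩ with hi₀
      set S : Fin (n+1) → R := fun i => ∑ j ∈ Finset.range (k+2), a j * (X i : R) ^ (p ^ j)
        with hS
      set b : R := S i₀ with hb
      refine ⟨fun j => (if j = 0 then 0 else (a (j-1))^p) - b^(p-1) * a j, ?_, ?_, ?_⟩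
      · simp [ha1, ha0 (k+2) le_rfl]
      · intro j hj
        show (if j = 0 then 0 else (a (j-1))^p) - b^(p-1) * a j = 0
        rw [ha0 (j-1) (by omega), ha0 j (by omega)]
        simp
        omega
      · intro i hi
        have hkey : ∑ j ∈ Finset.range (k+3),
            ((if j = 0 then 0 else (a (j-1))^p) - b^(p-1) * a j) * (X i : R) ^ (p ^ j)
            = (S i)^p - b^(p-1) * S i := by
          rw [hS]
          simp only [sub_mul]
          rw [Finset.sum_sub_distrib]
          congr 1
          · rw [Finset.sum_range_succ' (fun j => (if j = 0 then 0 else (a (j-1))^p) * (X i : R) ^ (p ^ j)) (k+2)]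
            simp only [Nat.add_sub_cancel, if_neg (Nat.succ_ne_zero _)]
            rw [fresh]
            simp
          · rw [Finset.sum_range_succ, ha0 (k+2) le_rfl]
            rw [Finset.mul_sum]
            simp [mul_assoc]
        rw [hkey]
        rcases Nat.lt_or_ge (i : ℕ) (k+1) with hlt | hge
        · have hSi : S i = 0 := hav i (by omega)
          rw [hSi]
          simp
          omega
        · have hv : (i₀ : ℕ) = k + 1 := rfl
          have : i = i₀ := Fin.ext (by rw [hv]; omega)
          rw [this, ← hb]
          have hbb : b^(p-1) * b = b^p := by rw [← pow_succ, Nat.sub_add_cancel hp1]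
          rw [hbb, sub_self]

end Poly

section Poly2
open MvPolynomial

variable (p n : ℕ) [Fact p.Prime]

local notation "R" => MvPolynomial (Fin (n+1)) (ZMod p)

lemma pow_identity (κ : ℕ) : ∃ c : ℕ → R, ∀ i : Fin (n+1),
    (X i : R) ^ (p ^ κ) = ∑ j ∈ Finset.range (n+1), c j * (X i : R) ^ (p ^ j) := by
  have hp1 : 1 ≤ p := (Fact.out : p.Prime).one_le
  obtain ⟨a, ha1, ha0, hav⟩ := psi_aux p n n le_rfl
  have hpsi : ∀ i : Fin (n+1), (X i : R) ^ (p ^ (n+1)) =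
      ∑ j ∈ Finset.range (n+1), (-(a j)) * (X i : R) ^ (p ^ j) := by
    intro i
    have h := hav i (Nat.lt_succ_iff.mp i.isLt)
    rw [Finset.sum_range_succ, ha1, one_mul] at h
    have h2 : (X i : R)^(p^(n+1)) = -(∑ j ∈ Finset.range (n+1), a j * (X i : R) ^ (p ^ j)) := by
      linear_combination h
    rw [h2, ← Finset.sum_neg_distrib]
    exact Finset.sum_congr rfl fun j _ => (neg_mul _ _).symm
  induction κ with
  | zero =>
      refine ⟨fun j => if j = 0 then 1 else 0, fun i => ?_⟩
      symm
      rw [Finset.sum_eq_single 0]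
      · simp
      · intro b _ hb; simp [hb]
      · intro hmem; exact absurd (Finset.mem_range.mpr (by omega)) hmem
  | succ κ ih =>
      obtain ⟨c, hc⟩ := ih
      refine ⟨fun j => (if j = 0 then 0 else (c (j-1))^p) + (c n)^p * (-(a j)), fun i => ?_⟩
      have h1 : (X i : R)^(p^(κ+1)) = ((X i : R)^(p^κ))^p := by rw [← pow_mul, pow_succ]
      have hsplit : ∑ j ∈ Finset.range (n+1),
          ((if j = 0 then 0 else (c (j-1))^p) + (c n)^p * (-(a j))) * (X i : R) ^ (p ^ j)
          = (∑ j ∈ Finset.range n, (c j)^p * (X i : R) ^ (p ^ (j+1)))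
            + (c n)^p * ∑ j ∈ Finset.range (n+1), (-(a j)) * (X i : R) ^ (p ^ j) := by
        simp only [add_mul]
        rw [Finset.sum_add_distrib]
        congr 1
        · rw [Finset.sum_range_succ'
            (fun j => (if j = 0 then 0 else (c (j-1))^p) * (X i : R) ^ (p ^ j)) n]
          simp
        · rw [Finset.mul_sum]
          exact Finset.sum_congr rfl fun j _ => by ring
      rw [hsplit, h1, hc i, fresh p n c i (n+1), Finset.sum_range_succ, hpsi i]

lemma pow_pred_identity (κ : ℕ) : ∃ c : ℕ → R, ∀ i : Fin (n+1),
    (X i : R) ^ (p ^ κ - 1) = ∑ j ∈ Finset.range (n+1), c j * (X i : R) ^ (p ^ j - 1) := by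
  have hp1 : 1 ≤ p := (Fact.out : p.Prime).one_le
  obtain ⟨c, hc⟩ := pow_identity p n κ
  refine ⟨c, fun i => ?_⟩
  have hX : (X i : R) ≠ 0 := MvPolynomial.X_ne_zero i
  have e1 : ∀ m : ℕ, 1 ≤ m → (X i : R) ^ (m - 1) * X i = X i ^ m := fun m hm => by
    rw [← pow_succ, Nat.sub_add_cancel hm]
  apply mul_right_cancel₀ hX
  rw [Finset.sum_mul, e1 _ (Nat.one_le_pow _ _ (by omega)), hc i]
  exact Finset.sum_congr rfl fun j _ => by
    rw [mul_assoc, e1 _ (Nat.one_le_pow _ _ (by omega))]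

end Poly2

lemma Vop_comm (p N : ℕ) (i j : Fin N) : Vop p N i * Vop p N j = Vop p N j * Vop p N i := by
  rcases eq_or_ne i j with rfl | hij
  · rfl
  refine Finsupp.lhom_ext fun e b => ?_
  rw [Module.End.mul_apply, Module.End.mul_apply, Vop_single, Vop_single]
  by_cases h2 : 3 ≤ e j
  · rw [if_pos h2]
    by_cases h1 : 3 ≤ e i
    · rw [if_pos h1, Vop_single, Vop_single,
        if_pos (show 3 ≤ Function.update e j (e j - 2) i from by
          rw [Function.update_of_ne hij]; exact h1),
        if_pos (show 3 ≤ Function.update e i (e i - 2) j from by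
          rw [Function.update_of_ne hij.symm]; exact h2)]
      rw [Function.update_of_ne hij, Function.update_of_ne hij.symm,
        Function.update_comm hij]
    · rw [if_neg h1, map_zero, Vop_single,
        if_neg (show ¬ 3 ≤ Function.update e j (e j - 2) i from by
          rw [Function.update_of_ne hij]; exact h1)]
  · rw [if_neg h2, map_zero]
    by_cases h1 : 3 ≤ e i
    · rw [if_pos h1, Vop_single,
        if_neg (show ¬ 3 ≤ Function.update e i (e i - 2) j from by
          rw [Function.update_of_ne hij.symm]; exact h2)]
    · rw [if_neg h1, map_zero]


set_option maxHeartbeats 1000000 in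
/-- `𝒟^{n+1,n}_* = 𝒟^{n+1,∞}_*`: if `x ∈ (C_*)^{n+1}_{(1)}` satisfies `∂^{(κ)}(x) = 0`
for all `0 ≤ κ ≤ n`, then `∂^{(κ)}(x) = 0` for all `κ ≥ 0`. -/
theorem stmt9 (p : ℕ) (hp : p.Prime) (hodd : Odd p) (n : ℕ)
    (x : Vmod p (n + 1)) (hx : x ∈ Cpart p (n + 1) 1)
    (h : ∀ κ ≤ n, del p (n + 1) κ x = 0) :
    ∀ κ : ℕ, del p (n + 1) κ x = 0 := by
  haveI : Fact p.Prime := ⟨hp⟩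
  have hp1 : 1 ≤ p := hp.one_le
  intro κ
  let Vs : Set (Module.End (ZMod p) (Vmod p (n+1))) := Set.range (Vop p (n+1))
  letI cS : CommSemiring (Algebra.adjoin (ZMod p) Vs) :=
    Algebra.adjoinCommSemiringOfComm (ZMod p) (by
      rintro _ ⟨i, rfl⟩ _ ⟨j, rfl⟩
      exact Vop_comm p (n+1) i j)
  let v : Fin (n+1) → Algebra.adjoin (ZMod p) Vs :=
    fun i => ⟨Vop p (n+1) i, Algebra.subset_adjoin (Set.mem_range_self i)⟩
  let Ψ : MvPolynomial (Fin (n+1)) (ZMod p) →ₐ[ZMod p] Algebra.adjoin (ZMod p) Vs :=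
    @MvPolynomial.aeval (ZMod p) (Algebra.adjoin (ZMod p) Vs) (Fin (n+1)) _ cS
      (Algebra.adjoin (ZMod p) Vs).algebra v
  let Φ : MvPolynomial (Fin (n+1)) (ZMod p) →ₐ[ZMod p] Module.End (ZMod p) (Vmod p (n+1)) :=
    ((Algebra.adjoin (ZMod p) Vs).val).comp Ψ
  have hΦX : ∀ i, Φ (MvPolynomial.X i) = Vop p (n+1) i := fun i => by
    simp [Φ, Ψ, v]
  let w : Fin (n+1) → Vmod p (n+1) := fun i => del p (n+1) 0 (x.filter fun d => Even (d i))
  have hdel : ∀ κ' : ℕ, del p (n+1) κ' x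
      = ∑ i : Fin (n+1), Φ (MvPolynomial.X i ^ (p ^ κ' - 1)) (w i) := by
    intro κ'
    rw [del_eq hp1 x hx κ']
    exact Finset.sum_congr rfl fun i _ => by rw [map_pow, hΦX]
  obtain ⟨c, hc⟩ := pow_pred_identity p n κ
  rw [hdel κ]
  have step : ∀ i : Fin (n+1), Φ (MvPolynomial.X i ^ (p ^ κ - 1)) (w i)
      = ∑ j ∈ Finset.range (n+1), Φ (c j) (Φ (MvPolynomial.X i ^ (p ^ j - 1)) (w i)) := by
    intro i
    rw [hc i, map_sum, LinearMap.sum_apply]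
    exact Finset.sum_congr rfl fun j _ => by rw [map_mul, Module.End.mul_apply]
  calc ∑ i : Fin (n+1), Φ (MvPolynomial.X i ^ (p ^ κ - 1)) (w i)
      = ∑ i : Fin (n+1), ∑ j ∈ Finset.range (n+1),
          Φ (c j) (Φ (MvPolynomial.X i ^ (p ^ j - 1)) (w i)) :=
        Finset.sum_congr rfl fun i _ => step i
    _ = ∑ j ∈ Finset.range (n+1),
          Φ (c j) (∑ i : Fin (n+1), Φ (MvPolynomial.X i ^ (p ^ j - 1)) (w i)) := by
        rw [Finset.sum_comm]
        exact Finset.sum_congr rfl fun j _ => (map_sum (Φ (c j)) _ _).symm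
    _ = 0 := by
        refine Finset.sum_eq_zero fun j hj => ?_
        rw [← hdel j, h j (Nat.lt_succ_iff.mp (Finset.mem_range.mp hj)), map_zero]
end

section
/- Let p be an odd prime and n ≥ 0, and let π : (C_*)^{n+1} → (N_*)^n ⊗ L_* denote the tensor product of the projections C_* → N_* on the first n tensor factors and the projection C_* → L_* on the last factor. If c ∈ 𝒞^{n+1,∞}_* and the image of c under π followed by the truncation (N_*)^n ⊗ L_* → (N_*)^n ⊗ L_{<p^n} vanishes, then already π(c) = 0. -/
/-- The subspace `𝒞^{n,∞}_* = ⋂_{κ ≥ 0} ker ∂^{(κ)}` (inside the span of the basis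
tensors with all degrees `≥ 1`). -/
noncomputable def CkerInf (p n : ℕ) : Submodule (ZMod p) (Vmod p n) :=
  Finsupp.supported (ZMod p) (ZMod p) {d : Fin n → ℕ | ∀ i, 1 ≤ d i} ⊓
    ⨅ κ : ℕ, LinearMap.ker (del p n κ)

/-- The index tuples of the basis of `(N_*)^n ⊗ L_*` inside `(C_*)^{n+1}`:
first `n` components odd, last component even (and `≥ 2`); the basis element
`y_{2m}` of `L_*` corresponds to `c_{2m}` in the last tensor factor. -/
def NLSet (n : ℕ) : Set (Fin (n + 1) → ℕ) :=
  {d | (∀ i : Fin (n + 1), i ≠ Fin.last n → Odd (d i)) ∧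
    Even (d (Fin.last n)) ∧ 2 ≤ d (Fin.last n)}

open scoped Classical in
/-- The projection `π : (C_*)^{n+1} → (N_*)^n ⊗ L_*`, the tensor product of the
projections `C_* → N_*` on the first `n` factors and `C_* → L_*` on the last factor. -/
noncomputable def piNL (p n : ℕ) : Vmod p (n + 1) →ₗ[ZMod p] Vmod p (n + 1) :=
  Finsupp.lift (Vmod p (n + 1)) (ZMod p) (Fin (n + 1) → ℕ) fun d =>
    if d ∈ NLSet n then Finsupp.single d (1 : ZMod p) else 0

/-- The truncation map `(N_*)^n ⊗ L_* → (N_*)^n ⊗ L_{<p^k}`: the identity on the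
`(N_*)^n`-factors, with `y_{2m} ↦ y_{2m}` for `m < p^k` and `y_{2m} ↦ 0` for `m ≥ p^k`. -/
noncomputable def truncL (p n k : ℕ) : Vmod p (n + 1) →ₗ[ZMod p] Vmod p (n + 1) :=
  Finsupp.lift (Vmod p (n + 1)) (ZMod p) (Fin (n + 1) → ℕ) fun d =>
    if d (Fin.last n) < 2 * p ^ k then Finsupp.single d (1 : ZMod p) else 0

/-!
Write `c(d)` for the coefficient of `c` at the degree tuple `d`, and `d = oddExcept (last n) a` for
the tuples `(2a₀+1, …, 2aₙ₋₁+1, 2aₙ)` on which `π` lives. Halving degrees, the coefficient of an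
all-odd tuple in `∂^{(κ)} c = 0` says that the functionals `Φᵢ : x^u ↦ c(oddExcept i (a + u))` on
`𝔽_p[x₀, …, xₙ]` satisfy `∑ᵢ (-1)ⁱ Φᵢ(g · xᵢ^{p^κ}) = 0` for all `g` and `κ`, hence
`∑ᵢ (-1)ⁱ Φᵢ(P(xᵢ)) = 0` for every additive polynomial `P(Y) = ∑ γ_κ Y^{p^κ}`. The Moore polynomial
of `x₀, …, xₙ₋₁` is such a `P`: it vanishes at these variables and equals `Y^{pⁿ}` plus terms of
lower degree in `Y` whose coefficients do not involve `xₙ`. So only `Φₙ(P(xₙ))` survives, and it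
expresses the coefficient at last degree `2aₙ` through coefficients at smaller last degree; by
induction everything reduces to last degrees `< 2pⁿ`, where the truncated hypothesis applies.
-/

open Finset

section Moore

variable {R : Type*} [CommRing R] (p : ℕ) (x : ℕ → R)

/-- Coefficients of the Moore polynomials `P_k(Y) = ∑_{κ ≤ k} mooreCoeff p x k κ * Y ^ p ^ κ`,
defined by `P_0(Y) = Y` and `P_{k+1}(Y) = P_k(Y) ^ p - P_k(x_k) ^ (p - 1) * P_k(Y)`. -/
def mooreCoeff : ℕ → ℕ → R
  | 0, κ => if κ = 0 then 1 else 0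
  | k + 1, κ => (if κ = 0 then 0 else mooreCoeff k (κ - 1) ^ p) -
      (∑ j ∈ range (k + 1), mooreCoeff k j * x k ^ p ^ j) ^ (p - 1) * mooreCoeff k κ

def moorePoly (k : ℕ) (y : R) : R :=
  ∑ κ ∈ range (k + 1), mooreCoeff p x k κ * y ^ p ^ κ

variable {p}

theorem mooreCoeff_eq_zero_of_lt (hp : p ≠ 0) {k κ : ℕ} (h : k < κ) : mooreCoeff p x k κ = 0 := by
  induction k generalizing κ with
  | zero => simp [mooreCoeff, h.ne']
  | succ k ih => simp [mooreCoeff, ih (by omega : k < κ), ih (by omega : k < κ - 1), zero_pow hp]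

theorem mooreCoeff_self (hp : p ≠ 0) (k : ℕ) : mooreCoeff p x k k = 1 := by
  induction k with
  | zero => simp [mooreCoeff]
  | succ k ih => simp [mooreCoeff, ih, mooreCoeff_eq_zero_of_lt x hp k.lt_succ_self]

variable [Fact p.Prime] [CharP R p]

theorem moorePoly_succ (k : ℕ) (y : R) :
    moorePoly p x (k + 1) y =
      moorePoly p x k y ^ p - moorePoly p x k (x k) ^ (p - 1) * moorePoly p x k y := by
  have hp := (Fact.out : p.Prime).ne_zero
  simp only [moorePoly, mooreCoeff, sub_mul, sum_sub_distrib, mul_assoc, ← mul_sum]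
  congr 1
  · rw [sum_range_succ', if_pos rfl, zero_mul, add_zero, sum_pow_char]
    refine sum_congr rfl fun j _ => ?_
    rw [if_neg j.succ_ne_zero, Nat.add_sub_cancel, mul_pow, ← pow_mul, ← pow_succ]
  · rw [sum_range_succ _ (k + 1), mooreCoeff_eq_zero_of_lt x hp k.lt_succ_self, zero_mul, add_zero]

theorem moorePoly_eq_zero {i k : ℕ} (h : i < k) : moorePoly p x k (x i) = 0 := by
  have hp := (Fact.out : p.Prime).pos
  induction k with
  | zero => omega
  | succ k ih =>
    rw [moorePoly_succ]
    rcases (Nat.lt_succ_iff_lt_or_eq.mp h) with h | rfl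
    · rw [ih h, zero_pow hp.ne', mul_zero, sub_zero]
    · rw [← pow_succ, Nat.sub_add_cancel hp, sub_self]

end Moore

section MonomialFunctional

open MvPolynomial

variable {σ τ K : Type*} [CommRing K]

noncomputable def monomialFunctional (F : (σ →₀ ℕ) → K) : MvPolynomial σ K →ₗ[K] K :=
  (basisMonomials σ K).constr K F

theorem monomialFunctional_monomial (F : (σ →₀ ℕ) → K) (u : σ →₀ ℕ) (a : K) :
    monomialFunctional F (monomial u a) = a * F u := by
  rw [show monomial u a = a • basisMonomials σ K u by simp [smul_monomial], map_smul,
    monomialFunctional, Module.Basis.constr_basis, smul_eq_mul]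

theorem monomialFunctional_mul_monomial (F : (σ →₀ ℕ) → K) (v : σ →₀ ℕ) (g : MvPolynomial σ K) :
    monomialFunctional F (g * monomial v 1) = monomialFunctional (fun u => F (u + v)) g := by
  induction g using MvPolynomial.induction_on' with
  | monomial u a => simp only [monomial_mul, mul_one, monomialFunctional_monomial]
  | add g h hg hh => rw [add_mul, map_add, map_add, hg, hh]

theorem monomialFunctional_rename (F : (τ →₀ ℕ) → K) (f : σ → τ) (g : MvPolynomial σ K) :
    monomialFunctional F (rename f g) = monomialFunctional (fun u => F (u.mapDomain f)) g := by
  induction g using MvPolynomial.induction_on' with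
  | monomial u a => simp only [rename_monomial, monomialFunctional_monomial]
  | add g h hg hh => rw [map_add, map_add, map_add, hg, hh]

theorem sum_monomialFunctional_eq_zero [Fintype σ] (ε : σ → K) (F : σ → (σ →₀ ℕ) → K)
    (q : ℕ → ℕ) (hF : ∀ κ w, ∑ i, ε i * F i (w + Finsupp.single i (q κ)) = 0)
    (γ : ℕ → MvPolynomial σ K) (s : Finset ℕ) :
    ∑ i, ε i * monomialFunctional (F i) (∑ κ ∈ s, γ κ * X i ^ q κ) = 0 := by
  simp only [X_pow_eq_monomial, map_sum, monomialFunctional_mul_monomial, mul_sum]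
  rw [sum_comm]
  refine sum_eq_zero fun κ _ => ?_
  have hcomb : ∑ i, ε i • (fun w => F i (w + Finsupp.single i (q κ))) = 0 :=
    funext fun w => by simpa using hF κ w
  simpa [monomialFunctional] using congrArg (fun G => monomialFunctional G (γ κ)) hcomb

end MonomialFunctional

open MvPolynomial in
theorem apply_single_last_eq_zero {K : Type*} [CommRing K] {p : ℕ} [Fact p.Prime] [CharP K p]
    {n : ℕ} (ε : Fin (n + 1) → K) (hε : IsUnit (ε (Fin.last n)))
    (F : Fin (n + 1) → (Fin (n + 1) →₀ ℕ) → K)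
    (hF : ∀ κ w, ∑ i, ε i * F i (w + Finsupp.single i (p ^ κ)) = 0)
    (hlow : ∀ u : Fin (n + 1) →₀ ℕ, u (Fin.last n) < p ^ n → F (Fin.last n) u = 0) :
    F (Fin.last n) (Finsupp.single (Fin.last n) (p ^ n)) = 0 := by
  have hp := (Fact.out : p.Prime).ne_zero
  let x : ℕ → MvPolynomial (Fin n) K := fun i => if h : i < n then X ⟨i, h⟩ else 0
  let γ : ℕ → MvPolynomial (Fin (n + 1)) K := fun κ => rename Fin.castSucc (mooreCoeff p x n κ)
  have hroots (i : Fin n) : ∑ κ ∈ range (n + 1), γ κ * X i.castSucc ^ p ^ κ = 0 := by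
    simpa [moorePoly, x, γ] using congrArg (rename Fin.castSucc) (moorePoly_eq_zero x i.isLt)
  have htail : ∀ κ ∈ range n,
      monomialFunctional (F (Fin.last n)) (γ κ * X (Fin.last n) ^ p ^ κ) = 0 := by
    intro κ hκ
    have hzero : (fun u : Fin n →₀ ℕ => F (Fin.last n) (u.mapDomain Fin.castSucc +
        Finsupp.single (Fin.last n) (p ^ κ))) = 0 := by
      funext u
      refine hlow _ ?_
      have hu : u.mapDomain Fin.castSucc (Fin.last n) = 0 :=
        Finsupp.mapDomain_of_notMem_range _ _ fun ⟨i, hi⟩ => Fin.castSucc_ne_last i hi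
      simpa [hu] using
        Nat.pow_lt_pow_right (Fact.out : p.Prime).one_lt (mem_range.mp hκ)
    rw [X_pow_eq_monomial, monomialFunctional_mul_monomial, monomialFunctional_rename, hzero,
      monomialFunctional, map_zero, LinearMap.zero_apply]
  have hsum := sum_monomialFunctional_eq_zero ε F (p ^ ·) hF γ (range (n + 1))
  simp only [Fin.sum_univ_castSucc, hroots, map_zero, mul_zero, sum_const_zero, zero_add] at hsum
  rw [hε.mul_right_eq_zero, sum_range_succ, map_add, map_sum, sum_eq_zero htail, zero_add] at hsum
  simpa [γ, mooreCoeff_self x hp, X_pow_eq_monomial, monomialFunctional_monomial] using hsum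

theorem koszul_update_self {N : ℕ} (e : Fin N → ℕ) (i : Fin N) (v : ℕ) :
    koszul (Function.update e i v) i = koszul e i :=
  sum_congr rfl fun _ hj =>
    Function.update_of_ne (mem_filter.mp hj).2.ne _ _

theorem update_sub_eq_iff {N q : ℕ} (hq : 1 ≤ q) {d e : Fin N → ℕ} {i : Fin N} (he : Odd (e i)) :
    ((Even (d i) ∧ 2 * q ≤ d i) ∧ Function.update d i (d i - 2 * q + 1) = e) ↔
      d = Function.update e i (e i + (2 * q - 1)) := by
  have := he.pos
  constructor
  · rintro ⟨⟨-, hle⟩, rfl⟩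
    funext j
    rcases eq_or_ne j i with rfl | hj
    · simp only [Function.update_self]; omega
    · simp [hj]
  · rintro rfl
    refine ⟨⟨?_, ?_⟩, ?_⟩
    · simpa using he.add_odd (Nat.Even.sub_odd (by omega) (even_two_mul q) odd_one)
    · simp only [Function.update_self]; omega
    · funext j
      rcases eq_or_ne j i with rfl | hj
      · simp only [Function.update_self]; omega
      · simp [hj]

theorem del_apply_of_odd {p N : ℕ} (hp : p ≠ 0) (κ : ℕ) (c : Vmod p N) {e : Fin N → ℕ}
    (he : ∀ j, Odd (e j)) :
    del p N κ c e =
      ∑ i, (-1) ^ koszul e i * c (Function.update e i (e i + (2 * p ^ κ - 1))) := by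
  have hq : 1 ≤ p ^ κ := Nat.one_le_pow _ _ (Nat.pos_of_ne_zero hp)
  induction c using Finsupp.induction_linear with
  | zero => simp
  | add X Y hX hY => simp only [map_add, Finsupp.add_apply, hX, hY, mul_add, sum_add_distrib]
  | single d a =>
    simp only [del, Finsupp.lift_apply, Finsupp.sum_single_index, zero_smul, Finsupp.smul_apply,
      Finsupp.finsetSum_apply, smul_eq_mul, mul_sum]
    refine sum_congr rfl fun i _ => ?_
    by_cases hC : (Even (d i) ∧ 2 * p ^ κ ≤ d i) ∧ Function.update d i (d i - 2 * p ^ κ + 1) = e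
    · have hd := (update_sub_eq_iff hq (he i)).mp hC
      rw [if_pos hC.1, hC.2, ← hd, hd, koszul_update_self]
      simp [mul_comm]
    · have hd := mt (update_sub_eq_iff hq (he i)).mpr hC
      rw [Finsupp.single_eq_of_ne' hd]
      split_ifs with hcond
      · simp [Finsupp.single_eq_of_ne' (fun h => hC ⟨hcond, h⟩)]
      · simp

def oddExcept {N : ℕ} (i : Fin N) (a : Fin N → ℕ) : Fin N → ℕ :=
  fun j => 2 * a j + if j = i then 0 else 1

theorem neg_one_pow_koszul_of_odd {R : Type*} [CommMonoid R] [HasDistribNeg R] {N : ℕ}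
    {e : Fin N → ℕ} (he : ∀ j, Odd (e j)) (i : Fin N) :
    (-1 : R) ^ koszul e i = (-1) ^ (i : ℕ) := by
  rw [koszul, ← prod_pow_eq_pow_sum, prod_congr rfl fun j _ => (he j).neg_one_pow,
    prod_const, filter_gt_eq_Iio, Fin.card_Iio]

theorem update_odd_eq_oddExcept {N q : ℕ} (hq : 1 ≤ q) (b : Fin N → ℕ) (i : Fin N) :
    Function.update (fun j => 2 * b j + 1) i (2 * b i + 1 + (2 * q - 1)) =
      oddExcept i (b + Finsupp.single i q) := by
  funext j
  rcases eq_or_ne j i with rfl | hj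
  · simp only [oddExcept, Function.update_self, Pi.add_apply, Finsupp.single_eq_same,
      ↓reduceIte, add_zero]
    omega
  · simp [oddExcept, hj, Finsupp.single_eq_of_ne hj]

theorem sum_oddExcept_eq_zero {K : Type*} [CommRing K] {N q : ℕ} (f : (Fin N → ℕ) → K)
    (hR : ∀ e, (∀ j, Odd (e j)) →
      ∑ i, (-1) ^ koszul e i * f (Function.update e i (e i + (2 * q - 1))) = 0)
    (hq : 1 ≤ q) (b : Fin N → ℕ) :
    ∑ i : Fin N, (-1) ^ (i : ℕ) * f (oddExcept i (b + Finsupp.single i q)) = 0 := by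
  have hodd : ∀ j, Odd (2 * b j + 1) := fun j => odd_two_mul_add_one _
  simpa [neg_one_pow_koszul_of_odd hodd, update_odd_eq_oddExcept hq] using
    hR (fun j => 2 * b j + 1) hodd

theorem eq_zero_of_koszul_relations {K : Type*} [CommRing K] {p : ℕ} [Fact p.Prime] [CharP K p]
    {n : ℕ} (f : (Fin (n + 1) → ℕ) → K)
    (hR : ∀ κ e, (∀ j, Odd (e j)) →
      ∑ i, (-1) ^ koszul e i * f (Function.update e i (e i + (2 * p ^ κ - 1))) = 0)
    (hlow : ∀ a, a (Fin.last n) < p ^ n → f (oddExcept (Fin.last n) a) = 0)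
    (a : Fin (n + 1) → ℕ) : f (oddExcept (Fin.last n) a) = 0 := by
  induction hm : a (Fin.last n) using Nat.strong_induction_on generalizing a with
  | _ m ih =>
  obtain hsmall | hbig := lt_or_ge m (p ^ n)
  · exact hlow a (hm ▸ hsmall)
  set a' := Function.update a (Fin.last n) (m - p ^ n)
  have ha' : a' + Finsupp.single (Fin.last n) (p ^ n) = a := by
    funext j
    rcases eq_or_ne j (Fin.last n) with rfl | hj
    · simp only [a', Pi.add_apply, Function.update_self, Finsupp.single_eq_same]; omega
    · simp [a', hj, Finsupp.single_eq_of_ne hj]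
  have hpos : ∀ κ, 1 ≤ p ^ κ := fun κ => Nat.one_le_pow _ _ (Fact.out : p.Prime).pos
  rw [← ha']
  refine apply_single_last_eq_zero (fun i => (-1) ^ (i : ℕ)) (isUnit_neg_one.pow _)
    (fun i u => f (oddExcept i (a' + u))) (fun κ w => ?_) (fun u hu => ?_)
  · simpa [add_assoc] using sum_oddExcept_eq_zero f (hR κ) (hpos κ) (a' + w)
  · refine ih _ ?_ _ rfl
    have : (a' + ⇑u) (Fin.last n) = m - p ^ n + u (Fin.last n) := by simp [a']
    omega

theorem lift_ite_single_apply {R α : Type*} [CommSemiring R] (P : α → Prop) [DecidablePred P]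
    (X : α →₀ R) (e : α) :
    Finsupp.lift (α →₀ R) R α (fun d => if P d then Finsupp.single d 1 else 0) X e =
      if P e then X e else 0 := by
  induction X using Finsupp.induction_linear with
  | zero => simp
  | add X Y hX hY => simp only [map_add, Finsupp.add_apply, hX, hY]; split_ifs <;> simp
  | single d a =>
    rw [Finsupp.lift_apply, Finsupp.sum_single_index (by simp)]
    rcases eq_or_ne d e with rfl | hde
    · split_ifs <;> simp
    · split_ifs <;> simp [Finsupp.single_eq_of_ne' hde]

open scoped Classical in
theorem piNL_apply {p n : ℕ} (X : Vmod p (n + 1)) (e : Fin (n + 1) → ℕ) :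
    piNL p n X e = if e ∈ NLSet n then X e else 0 :=
  lift_ite_single_apply _ X e

theorem truncL_apply {p n k : ℕ} (X : Vmod p (n + 1)) (e : Fin (n + 1) → ℕ) :
    truncL p n k X e = if e (Fin.last n) < 2 * p ^ k then X e else 0 :=
  lift_ite_single_apply _ X e

theorem mem_NLSet_iff {n : ℕ} {e : Fin (n + 1) → ℕ} :
    e ∈ NLSet n ↔ ∃ a, a (Fin.last n) ≠ 0 ∧ oddExcept (Fin.last n) a = e := by
  constructor
  · rintro ⟨hodd, heven, hge⟩
    refine ⟨fun j => e j / 2, by dsimp only; omega, funext fun j => ?_⟩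
    rcases eq_or_ne j (Fin.last n) with rfl | hj
    · simp [oddExcept, Nat.two_mul_div_two_of_even heven]
    · simp [oddExcept, hj, Nat.two_mul_div_two_add_one_of_odd (hodd j hj)]
  · rintro ⟨a, ha, rfl⟩
    refine ⟨fun j hj => by simp [oddExcept, hj], by simp [oddExcept], ?_⟩
    simp only [oddExcept, ↓reduceIte, add_zero]
    omega

theorem stmt10_general (p : ℕ) (hp : p.Prime) (n : ℕ)
    (c : Vmod p (n + 1)) (hc : c ∈ CkerInf p (n + 1))
    (h : truncL p n n (piNL p n c) = 0) :
    piNL p n c = 0 := by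
  have : Fact p.Prime := ⟨hp⟩
  obtain ⟨hsupp, hker⟩ := Submodule.mem_inf.mp hc
  have hR : ∀ κ (e : Fin (n + 1) → ℕ), (∀ j, Odd (e j)) →
      ∑ i, (-1) ^ koszul e i * c (Function.update e i (e i + (2 * p ^ κ - 1))) = 0 := by
    intro κ e he
    rw [← del_apply_of_odd hp.ne_zero κ c he,
      LinearMap.mem_ker.mp ((Submodule.mem_iInf _).mp hker κ), Finsupp.zero_apply]
  have hlow : ∀ a, a (Fin.last n) < p ^ n → c (oddExcept (Fin.last n) a) = 0 := by
    intro a ha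
    by_cases h0 : a (Fin.last n) = 0
    · refine (Finsupp.mem_supported' _ _).mp hsupp _ fun hpos => ?_
      simpa [oddExcept, h0] using hpos (Fin.last n)
    · have hval := DFunLike.congr_fun h (oddExcept (Fin.last n) a)
      rwa [truncL_apply, if_pos (by simp only [oddExcept, ↓reduceIte]; omega), piNL_apply,
        if_pos (mem_NLSet_iff.mpr ⟨a, h0, rfl⟩)] at hval
  ext e
  rw [piNL_apply]
  split_ifs with he
  · obtain ⟨a, -, rfl⟩ := mem_NLSet_iff.mp he
    exact eq_zero_of_koszul_relations (fun d => c d) hR hlow a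
  · rfl

/-- If `c ∈ 𝒞^{n+1,∞}_*` and the image of `c` under `π` followed by the truncation
`(N_*)^n ⊗ L_* → (N_*)^n ⊗ L_{<p^n}` vanishes, then already `π(c) = 0`. -/
theorem stmt10 (p : ℕ) (hp : p.Prime) (hodd : Odd p) (n : ℕ)
    (c : Vmod p (n + 1)) (hc : c ∈ CkerInf p (n + 1))
    (h : truncL p n n (piNL p n c) = 0) :
    piNL p n c = 0 :=
  stmt10_general p hp n c hc h
end
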